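/- Let μ¹, μ² be compactly supported probability measures on R^d (support of diameter ≤ R) and T an optimal transport map for W₁ with T#μ¹ = μ². If P is bounded and Lipschitz, then ∫∫ |P(x,y)(y-x) - P(T(x),T(y))(T(y)-T(x))| dμ¹(x)dμ¹(y) ≤ C(‖P‖_{W^{1,∞}}, R) · W₁(μ¹, μ²), where W₁ denotes the 1-Wasserstein distance. -/

import Mathlib

/-!
Split `P(x,y)(y-x) - P(Tx,Ty)(Ty-Tx)` as `P(x,y)((y-x) - (Ty-Tx)) + (P(x,y) - P(Tx,Ty))(Ty-Tx)`.
Both terms are at most a constant times `|x - Tx| + |y - Ty|`: the first by boundedness of `P`,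
the second by its Lipschitz bound times `|Ty - Tx| ≤ R`, valid for `μ¹`-a.e. `x, y` because
`T` pushes `μ¹` onto `μ²`. Integrating in `y` and then in `x` against the probability measure
`μ¹` yields `2 (Cp + L R) ∫ |x - Tx| dμ¹`.
-/

open MeasureTheory Function

theorem norm_smul_sub_smul_le {𝕜 E : Type*} [NormedField 𝕜] [NormedAddCommGroup E]
    [NormedSpace 𝕜 E] (a b : 𝕜) (u v : E) :
    ‖a • u - b • v‖ ≤ ‖a‖ * ‖u - v‖ + ‖a - b‖ * ‖v‖ := by
  calc ‖a • u - b • v‖ = ‖a • (u - v) + (a - b) • v‖ := by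
        rw [smul_sub, sub_smul, sub_add_sub_cancel]
    _ ≤ ‖a‖ * ‖u - v‖ + ‖a - b‖ * ‖v‖ := by
        simpa only [norm_smul] using norm_add_le (a • (u - v)) ((a - b) • v)

theorem LipschitzWith.dist_le_mul_add_of_uncurry {α β γ : Type*} [PseudoMetricSpace α]
    [PseudoMetricSpace β] [PseudoMetricSpace γ] {f : α → β → γ} {L : NNReal}
    (hf : LipschitzWith L (uncurry f)) (x x' : α) (y y' : β) :
    dist (f x y) (f x' y') ≤ L * (dist x x' + dist y y') :=
  calc dist (f x y) (f x' y') ≤ L * dist (x, y) (x', y') := hf.dist_le_mul (x, y) (x', y')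
    _ ≤ L * (dist x x' + dist y y') := by
        rw [Prod.dist_eq]
        gcongr
        exact max_le_add_of_nonneg dist_nonneg dist_nonneg

theorem norm_smul_sub_sub_smul_sub_le {E : Type*} [NormedAddCommGroup E] [NormedSpace ℝ E]
    {P : E → E → ℝ} {Cp R : ℝ} {L : NNReal} {x y x' y' : E} (hP : |P x y| ≤ Cp)
    (hPl : LipschitzWith L (uncurry P)) (hR : ‖y' - x'‖ ≤ R) :
    ‖P x y • (y - x) - P x' y' • (y' - x')‖ ≤ (Cp + L * R) * (‖x - x'‖ + ‖y - y'‖) := by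
  have hdisp : ‖(y - x) - (y' - x')‖ ≤ ‖x - x'‖ + ‖y - y'‖ := by
    rw [add_comm, show (y - x) - (y' - x') = (y - y') - (x - x') by abel]
    exact norm_sub_le _ _
  have hPdiff : |P x y - P x' y'| ≤ L * (‖x - x'‖ + ‖y - y'‖) := by
    simpa only [dist_eq_norm, Real.norm_eq_abs] using hPl.dist_le_mul_add_of_uncurry x x' y y'
  calc ‖P x y • (y - x) - P x' y' • (y' - x')‖
      ≤ |P x y| * ‖(y - x) - (y' - x')‖ + |P x y - P x' y'| * ‖y' - x'‖ :=
        norm_smul_sub_smul_le _ _ _ _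
    _ ≤ Cp * (‖x - x'‖ + ‖y - y'‖) + L * (‖x - x'‖ + ‖y - y'‖) * R := by
        gcongr
        exact (abs_nonneg _).trans hP
    _ = (Cp + L * R) * (‖x - x'‖ + ‖y - y'‖) := by ring

theorem integral_integral_le_integral_add_integral {α β : Type*} [MeasurableSpace α]
    [MeasurableSpace β] {μ : Measure α} {ν : Measure β} [IsProbabilityMeasure μ]
    [IsProbabilityMeasure ν] {f : α → β → ℝ} {s : α → ℝ} {t : β → ℝ}
    (hf : ∀ x y, 0 ≤ f x y) (hs : Integrable s μ) (ht : Integrable t ν)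
    (hle : ∀ᵐ x ∂μ, ∀ᵐ y ∂ν, f x y ≤ s x + t y) :
    ∫ x, ∫ y, f x y ∂ν ∂μ ≤ ∫ x, s x ∂μ + ∫ y, t y ∂ν := by
  have hinner : ∀ᵐ x ∂μ, ∫ y, f x y ∂ν ≤ s x + ∫ y, t y ∂ν := hle.mono fun x hx => by
    calc ∫ y, f x y ∂ν ≤ ∫ y, (s x + t y) ∂ν :=
          integral_mono_of_nonneg (.of_forall (hf x)) ((integrable_const _).add ht) hx
      _ = s x + ∫ y, t y ∂ν := by simp [integral_add (integrable_const _) ht]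
  calc ∫ x, ∫ y, f x y ∂ν ∂μ ≤ ∫ x, (s x + ∫ y, t y ∂ν) ∂μ :=
        integral_mono_of_nonneg (.of_forall fun x => integral_nonneg (hf x))
          (hs.add (integrable_const _)) hinner
    _ = ∫ x, s x ∂μ + ∫ y, t y ∂ν := by simp [integral_add hs (integrable_const _)]

/-- Stability estimate for the nonlocal interaction term along an optimal transport map: if
`μ¹, μ²` are compactly supported probability measures (supports of diameter `≤ R`), `Tm` is an
optimal transport map for `W₁` pushing `μ¹` to `μ²`, and `P` is bounded and Lipschitz, then
`∫∫ ‖P(x,y)(y-x) - P(Tx,Ty)(Ty-Tx)‖ dμ¹dμ¹ ≤ C·W₁(μ¹,μ²)`, with `C = C(‖P‖_{W^{1,∞}}, R)` and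
`W₁(μ¹,μ²) = ∫‖x - Tx‖ dμ¹`. -/
theorem interaction_term_wasserstein_stability (d : ℕ) (R Cp : ℝ) (L : NNReal) :
    ∃ C : ℝ, ∀ (P : EuclideanSpace ℝ (Fin d) → EuclideanSpace ℝ (Fin d) → ℝ)
      (μ1 μ2 : Measure (EuclideanSpace ℝ (Fin d))),
      IsProbabilityMeasure μ1 → IsProbabilityMeasure μ2 →
      (∀ x y, |P x y| ≤ Cp) → LipschitzWith L (Function.uncurry P) →
      ∀ (S1 S2 : Set (EuclideanSpace ℝ (Fin d))),
        Bornology.IsBounded S1 → Bornology.IsBounded S2 →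
        μ1 S1ᶜ = 0 → μ2 S2ᶜ = 0 → Metric.diam S1 ≤ R → Metric.diam S2 ≤ R →
      ∀ (Tm : EuclideanSpace ℝ (Fin d) → EuclideanSpace ℝ (Fin d)),
        AEMeasurable Tm μ1 → μ1.map Tm = μ2 →
        Integrable (fun x => ‖x - Tm x‖) μ1 →
        -- optimality of the transport map `Tm` for the `W₁`-cost:
        (∀ π : Measure (EuclideanSpace ℝ (Fin d) × EuclideanSpace ℝ (Fin d)),
          π.map Prod.fst = μ1 → π.map Prod.snd = μ2 →
          (∫ x, ‖x - Tm x‖ ∂μ1) ≤ ∫ p, ‖p.1 - p.2‖ ∂π) →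
        ∫ x, ∫ y, ‖P x y • (y - x) - P (Tm x) (Tm y) • (Tm y - Tm x)‖ ∂μ1 ∂μ1
          ≤ C * ∫ x, ‖x - Tm x‖ ∂μ1 := by
  refine ⟨2 * (Cp + L * R), ?_⟩
  intro P μ1 μ2 _ _ hPb hPl S1 S2 _ hS2 _ hμ2S2 _ hdiam Tm hTm hmap hint _
  set K := Cp + L * R
  have hTS2 : ∀ᵐ x ∂μ1, Tm x ∈ S2 := ae_of_ae_map hTm (hmap ▸ ae_iff.2 hμ2S2)
  have hpoint : ∀ᵐ x ∂μ1, ∀ᵐ y ∂μ1, ‖P x y • (y - x) - P (Tm x) (Tm y) • (Tm y - Tm x)‖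
      ≤ K * ‖x - Tm x‖ + K * ‖y - Tm y‖ := hTS2.mono fun x hx => hTS2.mono fun y hy => by
    have hR : ‖Tm y - Tm x‖ ≤ R := by
      rw [← dist_eq_norm]
      exact (Metric.dist_le_diam_of_mem hS2 hy hx).trans hdiam
    rw [← mul_add]
    exact norm_smul_sub_sub_smul_sub_le (hPb x y) hPl hR
  calc _ ≤ ∫ x, K * ‖x - Tm x‖ ∂μ1 + ∫ y, K * ‖y - Tm y‖ ∂μ1 :=
        integral_integral_le_integral_add_integral (fun _ _ => norm_nonneg _)
          (hint.const_mul K) (hint.const_mul K) hpoint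
    _ = 2 * K * ∫ x, ‖x - Tm x‖ ∂μ1 := by rw [integral_const_mul]; ring
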